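/- arXiv:1504.03147 — 5 statements merged into one kernel-verified Lean document; each statement's English description precedes it below -/
import Mathlib

section
/- Let γ be a polynomial with complex coefficients and let c be a nonzero complex number. If exp(γ(z+c)) = exp(γ(z)) for all z ∈ ℂ, then γ has degree at most 1. -/
open Polynomial

/-- A polynomial over ℂ that is periodic with nonzero period is constant. -/
lemma periodic_poly_natDegree_eq_zero (p : Polynomial ℂ) (c : ℂ) (hc : c ≠ 0)
    (hp : ∀ z : ℂ, p.eval (z + c) = p.eval z) : p.natDegree = 0 := by
  have hvals : ∀ n : ℕ, p.eval ((n : ℂ) * c) = p.eval 0 := by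
    intro n
    induction n with
    | zero => simp
    | succ k ih =>
      have h1 : (((k : ℕ) + 1 : ℂ) * c) = (k : ℂ) * c + c := by ring
      push_cast
      rw [h1, hp, ih]
  have hq : p - C (p.eval 0) = 0 := by
    apply Polynomial.eq_zero_of_infinite_isRoot
    apply Set.Infinite.mono (s := (fun n : ℕ => (n : ℂ) * c) '' Set.univ)
    · rintro x ⟨n, -, rfl⟩
      simp [Polynomial.IsRoot, hvals n]
    · apply Set.Infinite.image
      · intro a _ b _ hab
        have h2 : (a : ℂ) * c = (b : ℂ) * c := hab
        have := mul_right_cancel₀ hc h2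
        exact_mod_cast this
      · exact Set.infinite_univ
  have hpc : p = C (p.eval 0) := by
    have := sub_eq_zero.mp hq; exact this
  rw [hpc]; exact Polynomial.natDegree_C _

/-- If `γ` is a complex polynomial, `c ≠ 0`, and `exp(γ(z+c)) = exp(γ(z))` for all `z`,
then `γ` has degree at most `1`. -/
theorem degree_le_one_of_exp_periodic (γ : Polynomial ℂ) (c : ℂ) (hc : c ≠ 0)
    (h : ∀ z : ℂ, Complex.exp (γ.eval (z + c)) = Complex.exp (γ.eval z)) :
    γ.degree ≤ 1 := by
  set δ : Polynomial ℂ := γ.comp (X + C c) - γ with hδ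
  have hexp : ∀ z : ℂ, Complex.exp (δ.eval z) = 1 := by
    intro z
    have h1 : δ.eval z = γ.eval (z + c) - γ.eval z := by simp [hδ]
    rw [h1, Complex.exp_sub, h z, div_self (Complex.exp_ne_zero _)]
  -- δ is constant: otherwise it would take the value π*I, but exp(π*I) = -1 ≠ 1
  have hδdeg : δ.natDegree = 0 := by
    by_contra hne
    have hpos : 0 < δ.degree := natDegree_pos_iff_degree_pos.mp (Nat.pos_of_ne_zero hne)
    obtain ⟨z, hz⟩ := Complex.exists_root (f := δ - C (Real.pi * Complex.I)) (by
      rw [degree_sub_C hpos]; exact hpos)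
    have hz' : δ.eval z = Real.pi * Complex.I := by
      have := hz
      simp only [IsRoot, eval_sub, eval_C, sub_eq_zero] at this
      exact this
    have := hexp z
    rw [hz'] at this
    rw [show ((Real.pi : ℂ) * Complex.I) = (Real.pi : ℂ) * Complex.I from rfl,
      Complex.exp_pi_mul_I] at this
    norm_num at this
  -- hence δ = C a, so the derivative of γ is periodic
  have hder : ∀ z : ℂ, (derivative γ).eval (z + c) = (derivative γ).eval z := by
    have hδC : δ = C (δ.coeff 0) := eq_C_of_natDegree_eq_zero hδdeg
    have hD : derivative δ = 0 := by rw [hδC]; exact derivative_C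
    have hD' : (derivative γ).comp (X + C c) - derivative γ = 0 := by
      have : derivative δ = (derivative γ).comp (X + C c) - derivative γ := by
        rw [hδ, derivative_sub, derivative_comp]
        simp
      rwa [this] at hD
    intro z
    have := sub_eq_zero.mp hD'
    calc (derivative γ).eval (z + c)
        = ((derivative γ).comp (X + C c)).eval z := by simp [eval_comp]
      _ = (derivative γ).eval z := by rw [this]
  have hder0 : (derivative γ).natDegree = 0 :=
    periodic_poly_natDegree_eq_zero _ c hc hder
  -- conclude
  by_contra hgt
  push_neg at hgt
  have h2 : 2 ≤ γ.natDegree := by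
    by_contra h2
    push_neg at h2
    have : γ.natDegree ≤ 1 := by omega
    exact absurd ((degree_le_of_natDegree_le this).trans (by norm_num)) (not_le.mpr hgt)
  have := degree_derivative_eq γ (by omega)
  rw [degree_eq_natDegree (fun h0 => by simp [h0] at this)] at this
  have : (derivative γ).natDegree = γ.natDegree - 1 := by exact_mod_cast this
  omega
end

section
/- Let γ be a polynomial with complex coefficients and let c be a complex number. If exp(γ(z+c) + γ(z)) − 2·exp(γ(z+c)) + 1 = 0 for all z ∈ ℂ, then γ is a constant polynomial. -/
/-- If `γ` is a complex polynomial, `c ∈ ℂ`, and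
`exp(γ(z+c) + γ(z)) - 2·exp(γ(z+c)) + 1 = 0` for all `z`, then `γ` is constant. -/
theorem constant_of_exp_equation (γ : Polynomial ℂ) (c : ℂ)
    (h : ∀ z : ℂ, Complex.exp (γ.eval (z + c) + γ.eval z) -
        2 * Complex.exp (γ.eval (z + c)) + 1 = 0) :
    ∃ a : ℂ, γ = Polynomial.C a := by
  suffices hd : γ.natDegree = 0 by
    obtain ⟨a, ha⟩ := Polynomial.natDegree_eq_zero.mp hd
    exact ⟨a, ha.symm⟩
  by_contra hd
  have h1 : 0 < γ.degree :=
    Polynomial.natDegree_pos_iff_degree_pos.mp (Nat.pos_of_ne_zero hd)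
  have h2 : 0 < (γ - Polynomial.C (Complex.log 2)).degree := by
    rwa [Polynomial.degree_sub_C h1]
  obtain ⟨z, hz⟩ := Complex.exists_root h2
  have hzv : γ.eval z = Complex.log 2 := by
    simpa [Polynomial.IsRoot, sub_eq_zero] using hz
  have hz2 : Complex.exp (γ.eval z) = 2 := by
    rw [hzv, Complex.exp_log]; norm_num
  have hh := h z
  rw [Complex.exp_add, hz2] at hh
  have : (1 : ℂ) = 0 := by linear_combination hh
  exact one_ne_zero this
end

section
/- Let γ be a nonconstant polynomial with complex coefficients, let c ∈ ℂ, and let e₁, e₂ be complex numbers. If e₁ + (e₁ − e₂)·exp(γ(z)) = (e₁ − e₂)·(exp(−γ(z+c)) − exp(−γ(z))) for all z ∈ ℂ, then e₁ = e₂. -/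
/-!
Both `w ↦ exp w + exp (-w) = 2 cosh w` and a nonconstant polynomial `γ` are surjective on `ℂ`.
So if `e₁ ≠ e₂` there is a `z` with `(e₁ - e₂) (exp γ(z) + exp (-γ(z))) = -e₁`, and at this `z`
the equation says `(e₁ - e₂) exp (-γ(z + c)) = 0`, which is impossible.
-/

open Complex

theorem Complex.exists_exp_add_exp_neg_eq (y : ℂ) : ∃ w, exp w + exp (-w) = y := by
  obtain ⟨v, hv⟩ := cos_surjective (y / 2)
  refine ⟨v * I, ?_⟩
  rw [← neg_mul, ← two_cos, hv]
  ring

/-- If `γ` is a nonconstant complex polynomial and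
`e₁ + (e₁ - e₂)·exp(γ(z)) = (e₁ - e₂)·(exp(-γ(z+c)) - exp(-γ(z)))` for all `z`,
then `e₁ = e₂`. -/
theorem e1_eq_e2_of_difference_equation (γ : Polynomial ℂ) (hγ : 0 < γ.natDegree)
    (c e₁ e₂ : ℂ)
    (h : ∀ z : ℂ, e₁ + (e₁ - e₂) * Complex.exp (γ.eval z) =
        (e₁ - e₂) * (Complex.exp (-γ.eval (z + c)) - Complex.exp (-γ.eval z))) :
    e₁ = e₂ := by
  by_contra hne
  have ha : e₁ - e₂ ≠ 0 := sub_ne_zero.mpr hne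
  obtain ⟨w, hw⟩ := exists_exp_add_exp_neg_eq (-e₁ / (e₁ - e₂))
  obtain ⟨z, hz⟩ : ∃ z, γ.eval z = w := IsAlgClosed.eval_surjective hγ.ne' w
  have hsum : (e₁ - e₂) * (exp (γ.eval z) + exp (-γ.eval z)) = -e₁ := by
    rw [hz, hw, mul_div_cancel₀ _ ha]
  have hvanish : (e₁ - e₂) * exp (-γ.eval (z + c)) = 0 := by
    linear_combination -h z + hsum
  exact mul_ne_zero ha (exp_ne_zero _) hvanish
end

section
/- Let γ be a nonconstant polynomial with complex coefficients, let c ∈ ℂ, and let e₁, e₂ be complex numbers. If e₁ + (e₁ − e₂)·exp(−γ(z)) = (e₂ − e₁)·(exp(γ(z+c)) − exp(γ(z))) for all z ∈ ℂ, then e₁ = e₂. -/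
/-! Choose `ω` with `lc(γ) ωⁿ = -1`. Along the ray `z = ω r`, `r → +∞`, both `γ(z)` and
`γ(z + c)` are asymptotic to `-rⁿ`, so `exp γ(z)` and `exp γ(z + c)` tend to `0`. Multiplying the
equation by `exp γ(z)` gives
`e₁ exp γ(z) + (e₁ - e₂) = (e₂ - e₁) (exp γ(z + c) - exp γ(z)) exp γ(z)`,
whose left side tends to `e₁ - e₂` and whose right side tends to `0`. -/

open Polynomial Filter Asymptotics Topology

lemma Complex.tendsto_re_atBot_of_isEquivalent_neg_ofReal {α : Type*} {l : Filter α}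
    {f : α → ℂ} {g : α → ℝ} (hfg : f ~[l] fun x => -(g x : ℂ)) (hg : Tendsto g l atTop) :
    Tendsto (fun x => (f x).re) l atBot := by
  have hsmall : ∀ᶠ x in l, ‖f x + g x‖ ≤ 2⁻¹ * ‖(g x : ℂ)‖ := by
    simpa [sub_neg_eq_add] using hfg.isLittleO.bound (by norm_num : (0 : ℝ) < 2⁻¹)
  refine tendsto_atBot_mono' l ?_ (tendsto_neg_atTop_atBot.comp (hg.const_mul_atTop
    (by norm_num : (0 : ℝ) < 2⁻¹)))
  filter_upwards [hsmall, hg.eventually_ge_atTop 0] with x hx hgx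
  show (f x).re ≤ -(2⁻¹ * g x)
  rw [Complex.norm_real, Real.norm_of_nonneg hgx] at hx
  have hre : (f x).re = (f x + g x).re - g x := by simp
  have := Complex.re_le_norm (f x + g x)
  linarith

lemma Polynomial.tendsto_re_eval_ofReal_atBot {q : ℂ[X]} (hq : 0 < q.natDegree) {a : ℝ}
    (ha : a < 0) (hlc : q.leadingCoeff = a) :
    Tendsto (fun r : ℝ => (q.eval (r : ℂ)).re) atTop atBot := by
  refine Complex.tendsto_re_atBot_of_isEquivalent_neg_ofReal (g := fun r => -a * r ^ q.natDegree)
    ?_ ((tendsto_pow_atTop hq.ne').const_mul_atTop (neg_pos.2 ha))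
  have hequiv : (fun r : ℝ => q.eval (r : ℂ)) ~[atTop]
      fun r => q.leadingCoeff * (r : ℂ) ^ q.natDegree :=
    (isEquivalent_cobounded_leading_monomial (P := q)).comp_tendsto
      (RCLike.tendsto_ofReal_atTop_cobounded ℂ)
  convert hequiv using 2 with r
  simp [hlc]

lemma Polynomial.exists_tendsto_re_eval_mul_add_atBot {p : ℂ[X]} (hp : 0 < p.natDegree) :
    ∃ ω : ℂ, ∀ c : ℂ, Tendsto (fun r : ℝ => (p.eval (ω * r + c)).re) atTop atBot := by
  have hlc : p.leadingCoeff ≠ 0 := leadingCoeff_ne_zero.2 (ne_zero_of_natDegree_gt hp)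
  obtain ⟨ω, hω⟩ := IsAlgClosed.exists_pow_nat_eq (-p.leadingCoeff⁻¹) hp
  have hω0 : ω ≠ 0 := by rintro rfl; simp [zero_pow hp.ne', hlc] at hω
  refine ⟨ω, fun c => ?_⟩
  have hlin : (C ω * X + C c).natDegree = 1 := natDegree_linear hω0
  have hlc' : (p.comp (C ω * X + C c)).leadingCoeff = ((-1 : ℝ) : ℂ) := by
    rw [leadingCoeff_comp (by rw [hlin]; exact one_ne_zero), leadingCoeff_linear hω0, hω]
    simp [hlc]
  simpa [eval_comp] using
    tendsto_re_eval_ofReal_atBot (by rwa [natDegree_comp, hlin, mul_one]) neg_one_lt_zero hlc'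

/-- If `γ` is a nonconstant complex polynomial and
`e₁ + (e₁ - e₂)·exp(-γ(z)) = (e₂ - e₁)·(exp(γ(z+c)) - exp(γ(z)))` for all `z`,
then `e₁ = e₂`. -/
theorem e1_eq_e2_of_difference_equation' (γ : Polynomial ℂ) (hγ : 0 < γ.natDegree)
    (c e₁ e₂ : ℂ)
    (h : ∀ z : ℂ, e₁ + (e₁ - e₂) * Complex.exp (-γ.eval z) =
        (e₂ - e₁) * (Complex.exp (γ.eval (z + c)) - Complex.exp (γ.eval z))) :
    e₁ = e₂ := by
  obtain ⟨ω, hω⟩ := exists_tendsto_re_eval_mul_add_atBot hγ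
  have hexp (b : ℂ) : Tendsto (fun r : ℝ => Complex.exp (γ.eval (ω * r + b))) atTop (𝓝 0) :=
    Complex.tendsto_exp_comap_re_atBot.comp (tendsto_comap_iff.2 (hω b))
  have hu : Tendsto (fun r : ℝ => Complex.exp (γ.eval (ω * r))) atTop (𝓝 0) := by
    simpa using hexp 0
  have hcleared (r : ℝ) : e₁ * Complex.exp (γ.eval (ω * r)) + (e₁ - e₂) =
      (e₂ - e₁) * (Complex.exp (γ.eval (ω * r + c)) - Complex.exp (γ.eval (ω * r))) *
        Complex.exp (γ.eval (ω * r)) := by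
    have hinv : Complex.exp (-γ.eval (ω * r)) * Complex.exp (γ.eval (ω * r)) = 1 := by
      rw [Complex.exp_neg, inv_mul_cancel₀ (Complex.exp_ne_zero _)]
    linear_combination Complex.exp (γ.eval (ω * r)) * h (ω * r) - (e₁ - e₂) * hinv
  have hlhs := (hu.const_mul e₁).add_const (e₁ - e₂)
  have hrhs := (((hexp c).sub hu).const_mul (e₂ - e₁)).mul hu
  simp only [mul_zero, zero_add] at hlhs
  simp only [sub_zero, mul_zero] at hrhs
  exact sub_eq_zero.1 (tendsto_nhds_unique (hlhs.congr hcleared) hrhs)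
end

section
/- Let f be a transcendental meromorphic function on ℂ of finite order, c ∈ ℂ, and Δf(z) = f(z+c) − f(z) not identically zero. Suppose f and Δf share three distinct values e₁, e₂, ∞ CM, and suppose α and β are polynomials with (f − e₁)/(Δf − e₁) = e^{α} and (f − e₂)/(Δf − e₂) = e^{β} identically, where e^{α} is not identically 1, e^{β} is not identically 1, and e^{α} is not identically equal to e^{β}. Then, with γ = β − α, one has deg β = deg γ ≥ 1. -/
open Filter

/-- `f` has a zero (if `n > 0`) or pole (if `n < 0`) of exact order `n` at `z`:
near `z` (off `z` itself), `f w = (w - z) ^ n * g w` with `g` analytic and nonvanishing at `z`. -/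
def HasOrderAt (f : ℂ → ℂ) (z : ℂ) (n : ℤ) : Prop :=
  ∃ g : ℂ → ℂ, AnalyticAt ℂ g z ∧ g z ≠ 0 ∧
    ∀ᶠ w in nhdsWithin z {z}ᶜ, f w = (w - z) ^ n * g w

/-- Two meromorphic functions share the finite value `a` CM: `f - a` and `g - a` have
exactly the same zeros with the same multiplicities (including "identically `a`" regions). -/
def ShareCM (f g : ℂ → ℂ) (a : ℂ) : Prop :=
  (∀ z : ℂ, ∀ n : ℤ, 0 < n →
      (HasOrderAt (fun w => f w - a) z n ↔ HasOrderAt (fun w => g w - a) z n)) ∧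
  (∀ z : ℂ, (∀ᶠ w in nhds z, f w = a) ↔ (∀ᶠ w in nhds z, g w = a))

/-- Two meromorphic functions share `∞` CM: same poles with the same multiplicities. -/
def SharePolesCM (f g : ℂ → ℂ) : Prop :=
  ∀ z : ℂ, ∀ n : ℤ, n < 0 → (HasOrderAt f z n ↔ HasOrderAt g z n)

/-- `f` is a meromorphic function of finite order: `f = g / h` with `g, h` entire,
`h` not identically zero, and `|g|, |h| ≤ C·exp(|z|^ρ)`. -/
def FiniteOrderMero (f : ℂ → ℂ) : Prop :=
  ∃ g h : ℂ → ℂ, Differentiable ℂ g ∧ Differentiable ℂ h ∧ (¬ ∀ z, h z = 0) ∧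
    (∀ z, h z ≠ 0 → f z = g z / h z) ∧
    ∃ C ρ : ℝ, 0 < C ∧ 0 < ρ ∧
      ∀ z : ℂ, ‖g z‖ ≤ C * Real.exp (‖z‖ ^ ρ) ∧
        ‖h z‖ ≤ C * Real.exp (‖z‖ ^ ρ)

/-- `f` is transcendental: it is not a rational function (as a meromorphic function,
i.e. away from its poles). -/
def TranscendentalMero (f : ℂ → ℂ) : Prop :=
  ¬ ∃ p q : Polynomial ℂ, q ≠ 0 ∧
      ∀ z : ℂ, AnalyticAt ℂ f z → q.eval z ≠ 0 → f z = p.eval z / q.eval z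

/-! Eliminating `f` from the relations at `z` and at `z + c` yields an identity between
`e^α`, `e^β`, `e^{α(· + c)}` and `e^{β(· + c)}` (`ShiftRelation`), valid off the poles and hence
everywhere. Expanded, it says that a linear combination of exponentials of polynomials vanishes,
and by Borel's theorem a term whose exponent differs from every other exponent by a nonconstant
polynomial has coefficient zero. Unless `deg β = deg (β - α) ≥ 1`, comparing the coefficients of
`X ^ deg α` exhibits such a term with coefficient `±(e₂ - e₁)`, or `α` and `β` are both constant
and then `f` is constant. -/

open Polynomial Complex Topology

section Borel

/-- `(p e^r)' = (twistedDeriv r p) e^r`. -/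
noncomputable def twistedDeriv (r p : ℂ[X]) : ℂ[X] := derivative p + p * derivative r

theorem hasDerivAt_eval_mul_exp (r p : ℂ[X]) (z : ℂ) :
    HasDerivAt (fun w => p.eval w * exp (r.eval w))
      ((twistedDeriv r p).eval z * exp (r.eval z)) z := by
  refine ((p.hasDerivAt z).fun_mul (r.hasDerivAt z).cexp).congr_deriv ?_
  simp only [twistedDeriv, eval_add, eval_mul]
  ring

theorem twistedDeriv_zero_left : twistedDeriv 0 = derivative := by
  ext1 p
  simp [twistedDeriv]

theorem eq_zero_of_twistedDeriv_eq_zero {r p : ℂ[X]} (hr : 0 < r.natDegree)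
    (h : twistedDeriv r p = 0) : p = 0 := by
  by_contra hp
  have hr' : derivative r ≠ 0 := fun h' => hr.ne' (derivative_eq_zero.mp h')
  have hdeg : (p * derivative r).degree < p.degree := by
    rw [← neg_eq_iff_add_eq_zero.mpr h, degree_neg]
    exact degree_derivative_lt hp
  rw [degree_mul] at hdeg
  exact hdeg.not_ge (le_add_of_nonneg_right (zero_le_degree_iff.mpr hr'))

theorem eq_zero_of_iterate_twistedDeriv_eq_zero {r p : ℂ[X]} (hr : 0 < r.natDegree) (m : ℕ)
    (h : (twistedDeriv r)^[m] p = 0) : p = 0 := by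
  induction m generalizing p with
  | zero => exact h
  | succ m ih => exact eq_zero_of_twistedDeriv_eq_zero hr (ih h)

variable {ι : Type*}

theorem sum_iterate_twistedDeriv_eq_zero {s : Finset ι} {p r : ι → ℂ[X]}
    (h : ∀ z, ∑ i ∈ s, (p i).eval z * exp ((r i).eval z) = 0) (m : ℕ) (z : ℂ) :
    ∑ i ∈ s, ((twistedDeriv (r i))^[m] (p i)).eval z * exp ((r i).eval z) = 0 := by
  induction m generalizing z with
  | zero => exact h z
  | succ m ih =>
    have hderiv := HasDerivAt.fun_sum (u := s) (fun i _ =>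
      hasDerivAt_eval_mul_exp (r i) ((twistedDeriv (r i))^[m] (p i)) z)
    rw [show (fun w => ∑ i ∈ s, ((twistedDeriv (r i))^[m] (p i)).eval w * exp ((r i).eval w))
      = fun _ => 0 from funext ih] at hderiv
    simpa only [Function.iterate_succ_apply'] using hderiv.unique (hasDerivAt_const z 0)

/-- A form of **Borel's theorem** on exponential polynomials. -/
theorem eq_zero_of_sum_eval_mul_exp_eq_zero {s : Finset ι} {i₀ : ι} (hi₀ : i₀ ∈ s)
    {p q : ι → ℂ[X]} (hq : ∀ j ∈ s, j ≠ i₀ → 0 < (q j - q i₀).natDegree)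
    (h : ∀ z, ∑ i ∈ s, (p i).eval z * exp ((q i).eval z) = 0) : p i₀ = 0 := by
  classical
  induction s using Finset.strongInduction generalizing p q with
  | H s ih =>
  by_cases hs : ∃ j ∈ s, j ≠ i₀
  · obtain ⟨j, hj, hji⟩ := hs
    -- divide by `e^{q j}` and differentiate until the `j`-th term disappears
    set r := fun i => q i - q j
    set m := (p j).natDegree + 1
    have hr : ∀ z, ∑ i ∈ s, (p i).eval z * exp ((r i).eval z) = 0 := fun z => by
      simp only [r, eval_sub, exp_sub, mul_div_assoc', ← Finset.sum_div, h z, zero_div]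
    have hj0 : (twistedDeriv (r j))^[m] (p j) = 0 := by
      simp only [r, sub_self, twistedDeriv_zero_left]
      exact iterate_derivative_eq_zero (Nat.lt_succ_self _)
    have hm := eq_zero_of_iterate_twistedDeriv_eq_zero (r := r i₀) (p := p i₀) (by
      simpa only [r, ← neg_sub (q j), natDegree_neg] using hq j hj hji) m
    refine hm (ih (s.erase j) (Finset.erase_ssubset hj) (Finset.mem_erase.2 ⟨hji.symm, hi₀⟩)
      (p := fun i => (twistedDeriv (r i))^[m] (p i)) (q := r) (fun k hk hki => ?_) fun z => ?_)
    · simpa only [r, sub_sub_sub_cancel_right] using hq k (Finset.mem_of_mem_erase hk) hki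
    · rw [Finset.sum_erase _ (by rw [hj0, eval_zero, zero_mul])]
      exact sum_iterate_twistedDeriv_eq_zero hr m z
  · push Not at hs
    refine Polynomial.funext fun z => ?_
    have hz := h z
    rw [Finset.sum_eq_single_of_mem i₀ hi₀ fun j hj hji => absurd (hs j hj) hji] at hz
    simpa using hz

theorem eq_zero_of_sum_mul_exp_eq_zero [Fintype ι] {a : ι → ℂ} {q : ι → ℂ[X]} (i₀ : ι)
    (hq : ∀ j, j ≠ i₀ → 0 < (q j - q i₀).natDegree)
    (h : ∀ z, ∑ i, a i * exp ((q i).eval z) = 0) : a i₀ = 0 := by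
  simpa using eq_zero_of_sum_eval_mul_exp_eq_zero (Finset.mem_univ i₀) (p := fun i => C (a i))
    (fun j _ => hq j) (by simpa using h)

end Borel

theorem natDegree_pos_of_coeff_ne_zero {R : Type*} [Semiring R] {p : R[X]} {n : ℕ} (hn : 0 < n)
    (h : p.coeff n ≠ 0) : 0 < p.natDegree :=
  hn.trans_le (le_natDegree_of_ne_zero h)

theorem coeff_taylor_of_natDegree_le {R : Type*} [Semiring R] {p : R[X]} {n : ℕ} (c : R)
    (h : p.natDegree ≤ n) : (taylor c p).coeff n = p.coeff n := by
  rcases h.lt_or_eq with h | rfl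
  · rw [coeff_eq_zero_of_natDegree_lt h]
    exact coeff_eq_zero_of_natDegree_lt ((natDegree_taylor p c).trans_lt h)
  · exact coeff_taylor_natDegree c p

theorem eval_eq_coeff_zero_of_natDegree_eq_zero {R : Type*} [Semiring R] {p : R[X]}
    (h : p.natDegree = 0) (x : R) : p.eval x = p.coeff 0 := by
  rw [eq_C_of_natDegree_eq_zero h, eval_C, coeff_C_zero]

theorem natDegree_pos_and_le_of_natDegree_ne_natDegree_sub {R : Type*} [Ring R] {α β : R[X]}
    (h : β.natDegree ≠ (β - α).natDegree) :
    0 < α.natDegree ∧ β.natDegree ≤ α.natDegree ∧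
      (β.coeff α.natDegree = 0 ∨ β.coeff α.natDegree = α.leadingCoeff) := by
  rcases h.lt_or_gt with h | h
  · have hβα : β.natDegree < α.natDegree := by
      by_contra! hαβ
      exact (natDegree_sub_le β α).not_gt (max_lt h (hαβ.trans_lt h))
    exact ⟨(Nat.zero_le _).trans_lt hβα, hβα.le, .inl (coeff_eq_zero_of_natDegree_lt hβα)⟩
  · have hαβ : α.natDegree = β.natDegree := by
      simpa using natDegree_sub_eq_left_of_natDegree_lt h
    have hcoeff := coeff_eq_zero_of_natDegree_lt (hαβ ▸ h)
    rw [coeff_sub, sub_eq_zero] at hcoeff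
    exact ⟨(Nat.zero_le _).trans_lt (hαβ ▸ h), hαβ.ge, .inr hcoeff⟩

theorem MeromorphicOn.eventually_analyticAt_add {𝕜 E : Type*} [NontriviallyNormedField 𝕜]
    [NormedAddCommGroup E] [NormedSpace 𝕜 E] [CompleteSpace E] {f : 𝕜 → E}
    (hf : MeromorphicOn f Set.univ) (z d : 𝕜) : ∀ᶠ y in 𝓝[≠] z, AnalyticAt 𝕜 f (y + d) := by
  have h := (hf (z + d) trivial).eventually_analyticAt
  rwa [← Filter.map_add_right_nhdsNE, Filter.eventually_map] at h

theorem eq_of_eventually_nhdsNE {X Y : Type*} [TopologicalSpace X] [TopologicalSpace Y]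
    [T2Space Y] {g h : X → Y} {z : X} [(𝓝[≠] z).NeBot] (hg : ContinuousAt g z)
    (hh : ContinuousAt h z) (H : ∀ᶠ y in 𝓝[≠] z, g y = h y) : g z = h z :=
  ((hg.eventuallyEq_nhds_iff_eventuallyEq_nhdsNE hh).1 H).eq_of_nhds

/-- Both sides are `(U - V) (U' - V') f(z + c)`, computed from the relations at `z + c` and at `z`
respectively; `U, V` stand for the values of `e^α, e^β` at `z` and `U', V'` for those at `z + c`. -/
def ShiftRelation (e₁ e₂ U V U' V' : ℂ) : Prop :=
  (U - V) * (e₂ * U' - e₁ * V' - (e₂ - e₁) * U' * V') =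
    (U' - V') * ((e₁ + e₂) * (U - V) + (e₂ - e₁) * (1 - U * V))

theorem shiftRelation_of_eq {e₁ e₂ x y w U V U' V' : ℂ}
    (h₁ : x - e₁ = U * ((y - x) - e₁)) (h₂ : x - e₂ = V * ((y - x) - e₂))
    (h₁' : y - e₁ = U' * ((w - y) - e₁)) (h₂' : y - e₂ = V' * ((w - y) - e₂)) :
    ShiftRelation e₁ e₂ U V U' V' := by
  unfold ShiftRelation
  linear_combination ((V' - U') * V + (V' - U')) * h₁ - ((V' - U') * U + (V' - U')) * h₂
    + ((U - V) * V') * h₁' - ((U - V) * U') * h₂'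

section Shift

variable {f u v : ℂ → ℂ} {c e₁ e₂ : ℂ}

theorem shiftRelation_of_meromorphicOn (hf : MeromorphicOn f Set.univ)
    (hu : Continuous u) (hv : Continuous v)
    (h₁ : ∀ z, AnalyticAt ℂ f z → AnalyticAt ℂ f (z + c) →
      f z - e₁ = u z * ((f (z + c) - f z) - e₁))
    (h₂ : ∀ z, AnalyticAt ℂ f z → AnalyticAt ℂ f (z + c) →
      f z - e₂ = v z * ((f (z + c) - f z) - e₂)) (z : ℂ) :
    ShiftRelation e₁ e₂ (u z) (v z) (u (z + c)) (v (z + c)) := by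
  unfold ShiftRelation
  apply eq_of_eventually_nhdsNE (z := z)
  · fun_prop
  · fun_prop
  filter_upwards [(hf z trivial).eventually_analyticAt, hf.eventually_analyticAt_add z c,
    hf.eventually_analyticAt_add z (c + c)] with y hy₀ hy₁ hy₂
  rw [← add_assoc] at hy₂
  exact shiftRelation_of_eq (h₁ y hy₀ hy₁) (h₂ y hy₀ hy₁) (h₁ (y + c) hy₁ hy₂) (h₂ (y + c) hy₁ hy₂)

theorem not_transcendentalMero_of_eq_const {K : ℂ}
    (h : ∀ z, AnalyticAt ℂ f z → f z = K) : ¬ TranscendentalMero f :=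
  not_not.mpr ⟨C K, 1, one_ne_zero, fun z hz _ => by simpa using h z hz⟩

theorem eq_const_of_meromorphicOn {U V : ℂ} (hf : MeromorphicOn f Set.univ) (hUV : U ≠ V)
    (h₁ : ∀ z, AnalyticAt ℂ f z → AnalyticAt ℂ f (z + c) →
      f z - e₁ = U * ((f (z + c) - f z) - e₁))
    (h₂ : ∀ z, AnalyticAt ℂ f z → AnalyticAt ℂ f (z + c) →
      f z - e₂ = V * ((f (z + c) - f z) - e₂)) (z : ℂ) (hz : AnalyticAt ℂ f z) :
    f z = (e₂ * U - e₁ * V - (e₂ - e₁) * U * V) / (U - V) := by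
  refine eq_of_eventually_nhdsNE hz.continuousAt continuousAt_const ?_
  filter_upwards [(hf z trivial).eventually_analyticAt, hf.eventually_analyticAt_add z c]
    with y hy₀ hy₁
  rw [eq_div_iff (sub_ne_zero.mpr hUV)]
  linear_combination U * h₂ y hy₀ hy₁ - V * h₁ y hy₀ hy₁

end Shift

section Exponents

variable {α β : ℂ[X]} {c e₁ e₂ : ℂ}

theorem not_forall_shiftRelation_of_natDegree_sub_eq_zero (he : e₁ ≠ e₂) (hα : 0 < α.natDegree)
    (hγ : (β - α).natDegree = 0) (hαβ : ¬ ∀ z, exp (α.eval z) = exp (β.eval z)) :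
    ¬ ∀ z, ShiftRelation e₁ e₂ (exp (α.eval z)) (exp (β.eval z)) (exp (α.eval (z + c)))
      (exp (β.eval (z + c))) := by
  intro hE
  obtain ⟨κ, hβ⟩ : ∃ κ, ∀ z, β.eval z = α.eval z + κ := ⟨(β - α).coeff 0, fun z => by
    rw [← eval_eq_coeff_zero_of_natDegree_eq_zero hγ z, eval_sub, add_sub_cancel]⟩
  have hk : exp κ ≠ 1 := fun hk => hαβ fun z => by rw [hβ, exp_add, hk, mul_one]
  set k := exp κ
  -- with `e^β = k e^α` the relation is `1 - k` times a relation between four exponentials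
  have ha : α.leadingCoeff ≠ 0 := leadingCoeff_ne_zero.mpr (ne_zero_of_natDegree_gt hα)
  have hA := coeff_taylor_of_natDegree_le c le_rfl (p := α)
  set t := e₂ - e₁
  have key := eq_zero_of_sum_mul_exp_eq_zero (q := ![α + taylor c α, α + taylor c α + taylor c α,
      α + α + taylor c α, taylor c α])
    (a := ![(1 - k) * (k * e₂ - e₁), -(1 - k) * t * k, (1 - k) * t * k, -(1 - k) * t]) 3
    (fun j hj => by
      refine natDegree_pos_of_coeff_ne_zero hα ?_
      fin_cases j <;> simp_all [coeff_add, ← two_mul]) fun z => by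
    have hz := hE z
    simp only [ShiftRelation, hβ, exp_add] at hz
    simp only [Fin.sum_univ_succ, Fin.sum_univ_zero, Matrix.cons_val_zero, Matrix.cons_val_succ,
      eval_add, taylor_eval, exp_add]
    linear_combination hz
  exact mul_ne_zero (neg_ne_zero.mpr (sub_ne_zero.mpr hk.symm)) (sub_ne_zero.mpr he.symm) key

theorem not_forall_shiftRelation_of_natDegree_eq_zero (he : e₁ ≠ e₂) (hα : 0 < α.natDegree)
    (hβ : β.natDegree = 0) (hβ1 : ¬ ∀ z, exp (β.eval z) = 1) :
    ¬ ∀ z, ShiftRelation e₁ e₂ (exp (α.eval z)) (exp (β.eval z)) (exp (α.eval (z + c)))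
      (exp (β.eval (z + c))) := by
  intro hE
  have hβ' := eval_eq_coeff_zero_of_natDegree_eq_zero hβ
  have hB : exp (β.coeff 0) ≠ 1 := fun hB => hβ1 fun z => by rw [hβ', hB]
  set B := exp (β.coeff 0)
  have ha : α.leadingCoeff ≠ 0 := leadingCoeff_ne_zero.mpr (ne_zero_of_natDegree_gt hα)
  have hA := coeff_taylor_of_natDegree_le c le_rfl (p := α)
  set t := e₂ - e₁
  have hsum z : ∑ i, ![-e₁, B * (e₂ - t * B), e₁ * B + t * B ^ 2 - t, B * (t - e₂ * B)] i *
      exp ((![α + taylor c α, α, taylor c α, 0] i).eval z) = 0 := by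
    have hz := hE z
    simp only [ShiftRelation, hβ'] at hz
    simp only [Fin.sum_univ_succ, Fin.sum_univ_zero, Matrix.cons_val_zero, Matrix.cons_val_succ,
      eval_add, eval_zero, taylor_eval, exp_add, exp_zero]
    linear_combination hz
  have he₁ : -e₁ = 0 := eq_zero_of_sum_mul_exp_eq_zero 0 (fun j hj => by
    refine natDegree_pos_of_coeff_ne_zero hα ?_
    fin_cases j <;> simp_all [coeff_add, ← two_mul]) hsum
  have he₂ : B * (t - e₂ * B) = 0 := eq_zero_of_sum_mul_exp_eq_zero 3 (fun j hj => by
    refine natDegree_pos_of_coeff_ne_zero hα ?_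
    fin_cases j <;> simp_all [coeff_add, ← two_mul]) hsum
  have he₂' : e₂ * (1 - B) = 0 := by
    linear_combination (mul_eq_zero.mp he₂).resolve_left (exp_ne_zero _) - he₁
  rcases mul_eq_zero.mp he₂' with h | h
  · exact he (by linear_combination -he₁ - h)
  · exact hB (by linear_combination -h)

theorem not_forall_shiftRelation_of_natDegree_le (he : e₁ ≠ e₂) (hα : 0 < α.natDegree)
    (hβ : 0 < β.natDegree) (hγ : 0 < (β - α).natDegree) (hβα : β.natDegree ≤ α.natDegree)
    (hb : β.coeff α.natDegree = 0 ∨ β.coeff α.natDegree = α.leadingCoeff) :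
    ¬ ∀ z, ShiftRelation e₁ e₂ (exp (α.eval z)) (exp (β.eval z)) (exp (α.eval (z + c)))
      (exp (β.eval (z + c))) := by
  intro hE
  have ha : α.leadingCoeff ≠ 0 := leadingCoeff_ne_zero.mpr (ne_zero_of_natDegree_gt hα)
  have hA := coeff_taylor_of_natDegree_le c le_rfl (p := α)
  have hB := coeff_taylor_of_natDegree_le c hβα
  have ha2 : α.leadingCoeff + α.leadingCoeff ≠ 0 := by simpa [← two_mul] using ha
  set t := e₂ - e₁
  -- Apart from `β + β(· + c)` and `α(· + c)`, each exponent differs from `β(· + c)` by a polynomial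
  -- whose coefficient of `X ^ deg α` is `a`, `2a`, `a + b` or `2a - b`, where `a` is the leading
  -- coefficient of `α` and `b ∈ {0, a}` that of `X ^ deg α` in `β`.
  have key := eq_zero_of_sum_mul_exp_eq_zero
    (q := ![α + taylor c β, α + taylor c α, α + taylor c α + taylor c β, β + taylor c β,
      β + taylor c α, β + taylor c α + taylor c β, α + β + taylor c β, α + β + taylor c α,
      taylor c β, taylor c α])
    (a := ![-e₂, e₁, t, e₂, -e₁, -t, t, -t, -t, t]) 8 (fun j hj => by
      fin_cases j
      all_goals first
        | exact absurd rfl hj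
        | simpa using hβ
        | simpa [← map_sub, natDegree_sub] using hγ
        | refine natDegree_pos_of_coeff_ne_zero hα ?_
          rcases hb with hb | hb <;> simp [coeff_add, hA, hB, hb, ha, ha2]) fun z => by
    have hz := hE z
    simp only [ShiftRelation] at hz
    simp only [Fin.sum_univ_succ, Fin.sum_univ_zero, Matrix.cons_val_zero, Matrix.cons_val_succ,
      eval_add, taylor_eval, exp_add]
    linear_combination -hz
  exact neg_ne_zero.mpr (sub_ne_zero.mpr he.symm) key

end Exponents

theorem deg_beta_eq_deg_gamma_general (f : ℂ → ℂ) (c : ℂ)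
    (hf : MeromorphicOn f Set.univ)
    (htrans : TranscendentalMero f)
    (e₁ e₂ : ℂ) (he : e₁ ≠ e₂)
    (α β : Polynomial ℂ)
    (hα : ∀ z : ℂ, AnalyticAt ℂ f z → AnalyticAt ℂ f (z + c) →
      f z - e₁ = Complex.exp (α.eval z) * ((f (z + c) - f z) - e₁))
    (hβ : ∀ z : ℂ, AnalyticAt ℂ f z → AnalyticAt ℂ f (z + c) →
      f z - e₂ = Complex.exp (β.eval z) * ((f (z + c) - f z) - e₂))
    (hβ1 : ¬ ∀ z : ℂ, Complex.exp (β.eval z) = 1)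
    (hαβ : ¬ ∀ z : ℂ, Complex.exp (α.eval z) = Complex.exp (β.eval z)) :
    β.degree = (β - α).degree ∧ 1 ≤ (β - α).degree := by
  have hE := shiftRelation_of_meromorphicOn (u := fun z => exp (α.eval z))
    (v := fun z => exp (β.eval z)) hf (by fun_prop) (by fun_prop) hα hβ
  have hγ : 0 < (β - α).natDegree := by
    refine Nat.pos_of_ne_zero fun hγ => ?_
    rcases α.natDegree.eq_zero_or_pos with hα0 | hα0
    · have hβ0 : β.natDegree = 0 := by
        simpa [hα0, hγ] using natDegree_add_le (β - α) α
      simp only [eval_eq_coeff_zero_of_natDegree_eq_zero hα0,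
        eval_eq_coeff_zero_of_natDegree_eq_zero hβ0] at hα hβ hαβ
      exact not_transcendentalMero_of_eq_const
        (eq_const_of_meromorphicOn hf (by simpa using hαβ) hα hβ) htrans
    · exact not_forall_shiftRelation_of_natDegree_sub_eq_zero he hα0 hγ hαβ hE
  have hdeg : β.natDegree = (β - α).natDegree := by
    by_contra hne
    obtain ⟨hα0, hβα, hb⟩ := natDegree_pos_and_le_of_natDegree_ne_natDegree_sub hne
    rcases β.natDegree.eq_zero_or_pos with hβ0 | hβ0
    · exact not_forall_shiftRelation_of_natDegree_eq_zero he hα0 hβ0 hβ1 hE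
    · exact not_forall_shiftRelation_of_natDegree_le he hα0 hβ0 hγ hβα hb hE
  rw [degree_eq_natDegree (ne_zero_of_natDegree_gt hγ), degree_eq_iff_natDegree_eq_of_pos hγ]
  exact ⟨hdeg, by exact_mod_cast hγ⟩

/-- Under the hypotheses of the main theorem, if
`(f - e₁)/(Δf - e₁) = e^α` and `(f - e₂)/(Δf - e₂) = e^β` with `e^α ≢ 1`, `e^β ≢ 1`
and `e^α ≢ e^β`, then with `γ = β - α` one has `deg β = deg γ ≥ 1`. -/
theorem deg_beta_eq_deg_gamma (f : ℂ → ℂ) (c : ℂ)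
    (hf : MeromorphicOn f Set.univ)
    (htrans : TranscendentalMero f)
    (hford : FiniteOrderMero f)
    (hΔ : ¬ ∀ z : ℂ, AnalyticAt ℂ f z → AnalyticAt ℂ f (z + c) → f (z + c) - f z = 0)
    (e₁ e₂ : ℂ) (he : e₁ ≠ e₂)
    (h1 : ShareCM f (fun z => f (z + c) - f z) e₁)
    (h2 : ShareCM f (fun z => f (z + c) - f z) e₂)
    (hinf : SharePolesCM f (fun z => f (z + c) - f z))
    (α β : Polynomial ℂ)
    (hα : ∀ z : ℂ, AnalyticAt ℂ f z → AnalyticAt ℂ f (z + c) →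
      f z - e₁ = Complex.exp (α.eval z) * ((f (z + c) - f z) - e₁))
    (hβ : ∀ z : ℂ, AnalyticAt ℂ f z → AnalyticAt ℂ f (z + c) →
      f z - e₂ = Complex.exp (β.eval z) * ((f (z + c) - f z) - e₂))
    (hα1 : ¬ ∀ z : ℂ, Complex.exp (α.eval z) = 1)
    (hβ1 : ¬ ∀ z : ℂ, Complex.exp (β.eval z) = 1)
    (hαβ : ¬ ∀ z : ℂ, Complex.exp (α.eval z) = Complex.exp (β.eval z)) :
    β.degree = (β - α).degree ∧ 1 ≤ (β - α).degree :=
  deg_beta_eq_deg_gamma_general f c hf htrans e₁ e₂ he α β hα hβ hβ1 hαβ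
end
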